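/- Let r be an odd number and λ a strict partition. For j odd, removing a bar of length rj from λ corresponds exactly to either removing a bar of length j from the strict partition λ^0 or removing a hook of length j from one of the partitions λ^1, ..., λ^t of the r-bar quotient; in particular, the total number of rj-bars of λ equals the number of j-bars of λ^0 plus the total number of j-hooks of λ^1, ..., λ^t. -/

import Mathlib

/-- `Xset r S i = { x : r*x + i ∈ S }`, for a strict partition viewed as a finset `S`. -/
def Xset (r : ℕ) (S : Finset ℕ) (i : ℕ) : Finset ℕ :=
  (S.filter (fun m => m % r = i)).image (fun m => m / r)

/-- The number of `m`-bars of a strict partition `S` (a finset of distinct positive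
integers): bars of the first kind replace a part `a ≥ m` by `a - m ∉ S` (removing it if
`a = m`), bars of the second kind remove two parts `a > b` with `a + b = m`. -/
def nbars (S : Finset ℕ) (m : ℕ) : ℕ :=
  (S.filter (fun a => m ≤ a ∧ a - m ∉ S)).card +
  ((S ×ˢ S).filter (fun p => p.2 < p.1 ∧ p.1 + p.2 = m)).card

/-- The number of `m`-hooks of the partition with Frobenius coordinates `(A | B)`
(arm lengths `A`, leg lengths `B`): an `m`-hook either shortens an arm, shortens a leg,
or removes a diagonal pair `(x, y) ∈ A × B` with `x + y + 1 = m`. -/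
def nhooks (A B : Finset ℕ) (m : ℕ) : ℕ :=
  (A.filter (fun x => m ≤ x ∧ x - m ∉ A)).card +
  (B.filter (fun y => m ≤ y ∧ y - m ∉ B)).card +
  ((A ×ˢ B).filter (fun p => p.1 + p.2 + 1 = m)).card

lemma mem_Xset {r i x : ℕ} (hi : i < r) {S : Finset ℕ} :
    x ∈ Xset r S i ↔ r * x + i ∈ S := by
  have hr : 0 < r := lt_of_le_of_lt (Nat.zero_le i) hi
  simp only [Xset, Finset.mem_image, Finset.mem_filter]
  constructor
  · rintro ⟨m, ⟨hm, hmod⟩, rfl⟩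
    have h := Nat.div_add_mod m r
    have h2 : r * (m / r) + i = m := by omega
    rwa [h2]
  · intro h
    refine ⟨r * x + i, ⟨h, ?_⟩, ?_⟩
    · simp [Nat.mul_add_mod, Nat.mod_eq_of_lt hi]
    · simp [Nat.mul_add_div hr, Nat.div_eq_of_lt hi]

lemma rj_le_iff {r j x i : ℕ} (hi : i < r) : r * j ≤ r * x + i ↔ j ≤ x := by
  constructor
  · intro h
    by_contra hx
    push_neg at hx
    have h2 : r * (x + 1) ≤ r * j := Nat.mul_le_mul_left r hx
    have h3 : r * (x + 1) = r * x + r := Nat.mul_succ r x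
    omega
  · intro h
    have := Nat.mul_le_mul_left r h
    omega

lemma mul_lt_iff' {r a b : ℕ} (hr : 0 < r) : r * a < r * b ↔ a < b := by
  constructor
  · intro h
    by_contra hx
    push_neg at hx
    have := Nat.mul_le_mul_left r hx
    omega
  · intro h
    have h2 : r * (a + 1) ≤ r * b := Nat.mul_le_mul_left r h
    have h3 : r * (a + 1) = r * a + r := Nat.mul_succ r a
    omega

lemma sub_rj {r j x i : ℕ} (h : j ≤ x) : r * x + i - r * j = r * (x - j) + i := by
  have h2 : r * x = r * (x - j) + r * j := by
    rw [← Nat.mul_add]; congr 1; omega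
  omega

lemma firstkind (r j : ℕ) (hr : 0 < r) (S : Finset ℕ) :
    (S.filter (fun a => r * j ≤ a ∧ a - r * j ∉ S)).card =
      ∑ i ∈ Finset.range r,
        ((Xset r S i).filter (fun x => j ≤ x ∧ x - j ∉ Xset r S i)).card := by
  rw [Finset.card_eq_sum_card_fiberwise (f := fun a => a % r) (t := Finset.range r)
    (fun a _ => Finset.mem_range.2 (Nat.mod_lt a hr))]
  refine Finset.sum_congr rfl fun i hi => ?_
  rw [Finset.mem_range] at hi
  refine Finset.card_nbij' (fun a => a / r) (fun x => r * x + i) ?_ ?_ ?_ ?_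
  · intro a ha
    simp only [Finset.mem_coe, Finset.mem_filter] at ha ⊢
    obtain ⟨⟨haS, hle, hsub⟩, hmod⟩ := ha
    have hd := Nat.div_add_mod a r
    have ha' : a = r * (a / r) + i := by omega
    have hjle : j ≤ a / r := (rj_le_iff hi).1 (by rw [← ha']; exact hle)
    refine ⟨(mem_Xset hi).2 (by rw [← ha']; exact haS), hjle, ?_⟩
    intro hc
    have hc2 := (mem_Xset hi).1 hc
    rw [← sub_rj hjle, ← ha'] at hc2
    exact hsub hc2
  · intro x hx
    simp only [Finset.mem_coe, Finset.mem_filter] at hx ⊢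
    obtain ⟨hxX, hle, hsub⟩ := hx
    refine ⟨⟨(mem_Xset hi).1 hxX, (rj_le_iff hi).2 hle, ?_⟩, ?_⟩
    · rw [sub_rj hle]
      intro hc
      exact hsub ((mem_Xset hi).2 hc)
    · simp [Nat.mul_add_mod, Nat.mod_eq_of_lt hi]
  · intro a ha
    simp only [Finset.mem_coe, Finset.mem_filter] at ha
    obtain ⟨-, hmod⟩ := ha
    have hd := Nat.div_add_mod a r
    show r * (a / r) + i = a
    omega
  · intro x hx
    show (r * x + i) / r = x
    simp [Nat.mul_add_div hr, Nat.div_eq_of_lt hi]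

lemma sum_residues {r a b : ℕ} (hr : 0 < r) (ha : a < r) (hb : b < r)
    (h : (a + b) % r = 0) : a + b = 0 ∨ a + b = r := by
  obtain ⟨k, hk⟩ := Nat.dvd_of_mod_eq_zero h
  have hk2 : k < 2 := by
    by_contra h'
    push_neg at h'
    have := Nat.mul_le_mul_left r h'
    omega
  interval_cases k
  · omega
  · right; omega

lemma range_sum_split (t : ℕ) (f : ℕ → ℕ) :
    ∑ i ∈ Finset.range (2*t+1), f i =
      f 0 + ∑ i ∈ Finset.Icc 1 t, (f i + f (2*t+1-i)) := by
  have h1 : Finset.range (2*t+1) = insert 0 (Finset.Icc 1 t ∪ Finset.Icc (t+1) (2*t)) := by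
    ext x; simp only [Finset.mem_range, Finset.mem_insert, Finset.mem_union, Finset.mem_Icc]
    omega
  have hd : Disjoint (Finset.Icc 1 t) (Finset.Icc (t+1) (2*t)) := by
    rw [Finset.disjoint_left]
    intro x hx hx'
    simp only [Finset.mem_Icc] at hx hx'
    omega
  have hswap : ∑ i ∈ Finset.Icc (t+1) (2*t), f i =
      ∑ i ∈ Finset.Icc 1 t, f (2*t+1-i) := by
    refine Finset.sum_nbij' (fun i => 2*t+1-i) (fun i => 2*t+1-i) ?_ ?_ ?_ ?_ ?_
    · intro a ha; simp only [Finset.mem_Icc] at ha ⊢; omega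
    · intro a ha; simp only [Finset.mem_Icc] at ha ⊢; omega
    · intro a ha; simp only [Finset.mem_Icc] at ha
      show 2*t+1-(2*t+1-a) = a; omega
    · intro a ha; simp only [Finset.mem_Icc] at ha
      show 2*t+1-(2*t+1-a) = a; omega
    · intro a ha
      simp only [Finset.mem_Icc] at ha
      show f a = f (2*t+1-(2*t+1-a))
      congr 1
      omega
  rw [h1, Finset.sum_insert (by simp), Finset.sum_union hd, hswap,
    Finset.sum_add_distrib]

lemma secondkind (t j : ℕ) (S : Finset ℕ) :
    ((S ×ˢ S).filter (fun p => p.2 < p.1 ∧ p.1 + p.2 = (2*t+1) * j)).card =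
      (((Xset (2*t+1) S 0) ×ˢ (Xset (2*t+1) S 0)).filter
        (fun p => p.2 < p.1 ∧ p.1 + p.2 = j)).card +
      ∑ i ∈ Finset.Icc 1 t,
        (((Xset (2*t+1) S i) ×ˢ (Xset (2*t+1) S (2*t+1-i))).filter
          (fun p => p.1 + p.2 + 1 = j)).card := by
  set r := 2*t+1 with hrdef
  have hr : 0 < r := by omega
  have hmaps : ∀ p ∈ (S ×ˢ S).filter (fun p => p.2 < p.1 ∧ p.1 + p.2 = r * j),
      min (p.1 % r) (p.2 % r) ∈ Finset.range (t+1) := by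
    intro p hp
    simp only [Finset.mem_filter, Finset.mem_product] at hp
    obtain ⟨⟨h1, h2⟩, hlt, hsum⟩ := hp
    have hm1 : p.1 % r < r := Nat.mod_lt _ hr
    have hm2 : p.2 % r < r := Nat.mod_lt _ hr
    have hmod0 : (p.1 % r + p.2 % r) % r = 0 := by
      rw [← Nat.add_mod, hsum, Nat.mul_mod_right]
    have := sum_residues hr hm1 hm2 hmod0
    simp only [Finset.mem_range]
    omega
  rw [Finset.card_eq_sum_card_fiberwise hmaps,
    show Finset.range (t+1) = insert 0 (Finset.Icc 1 t) from by
      ext x; simp only [Finset.mem_range, Finset.mem_insert, Finset.mem_Icc]; omega,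
    Finset.sum_insert (by simp)]
  congr 1
  -- fiber 0
  · refine Finset.card_nbij' (fun p => (p.1 / r, p.2 / r)) (fun q => (r * q.1, r * q.2))
      ?_ ?_ ?_ ?_
    · intro p hp
      simp only [Finset.mem_coe, Finset.mem_filter, Finset.mem_product] at hp ⊢
      obtain ⟨⟨⟨h1, h2⟩, hlt, hsum⟩, hmin⟩ := hp
      have hm1 : p.1 % r < r := Nat.mod_lt _ hr
      have hm2 : p.2 % r < r := Nat.mod_lt _ hr
      have hmod0 : (p.1 % r + p.2 % r) % r = 0 := by
        rw [← Nat.add_mod, hsum, Nat.mul_mod_right]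
      have hsr := sum_residues hr hm1 hm2 hmod0
      have hz1 : p.1 % r = 0 := by omega
      have hz2 : p.2 % r = 0 := by omega
      have hd1 := Nat.div_add_mod p.1 r
      have hd2 := Nat.div_add_mod p.2 r
      have e1 : p.1 = r * (p.1 / r) := by omega
      have e2 : p.2 = r * (p.2 / r) := by omega
      refine ⟨⟨(mem_Xset hr).2 (by rw [Nat.add_zero, ← e1]; exact h1),
        (mem_Xset hr).2 (by rw [Nat.add_zero, ← e2]; exact h2)⟩, ?_, ?_⟩
      · exact (mul_lt_iff' hr).1 (by omega)
      · have hmm : r * (p.1 / r + p.2 / r) = r * j := by rw [Nat.mul_add]; omega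
        exact Nat.eq_of_mul_eq_mul_left hr hmm
    · intro q hq
      simp only [Finset.mem_coe, Finset.mem_filter, Finset.mem_product] at hq ⊢
      obtain ⟨⟨h1, h2⟩, hlt, hsum⟩ := hq
      have h1' := (mem_Xset hr).1 h1
      have h2' := (mem_Xset hr).1 h2
      rw [Nat.add_zero] at h1' h2'
      have hmul : r * q.1 + r * q.2 = r * j := by
        rw [← Nat.mul_add, hsum]
      refine ⟨⟨⟨h1', h2'⟩, (mul_lt_iff' hr).2 hlt, hmul⟩, ?_⟩
      simp [Nat.mul_mod_right]
    · intro p hp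
      simp only [Finset.mem_coe, Finset.mem_filter, Finset.mem_product] at hp
      obtain ⟨⟨⟨h1, h2⟩, hlt, hsum⟩, hmin⟩ := hp
      have hm1 : p.1 % r < r := Nat.mod_lt _ hr
      have hm2 : p.2 % r < r := Nat.mod_lt _ hr
      have hmod0 : (p.1 % r + p.2 % r) % r = 0 := by
        rw [← Nat.add_mod, hsum, Nat.mul_mod_right]
      have hsr := sum_residues hr hm1 hm2 hmod0
      have hd1 := Nat.div_add_mod p.1 r
      have hd2 := Nat.div_add_mod p.2 r
      show (r * (p.1 / r), r * (p.2 / r)) = p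
      refine Prod.ext ?_ ?_ <;> simp <;> omega
    · intro q hq
      show (r * q.1 / r, r * q.2 / r) = q
      refine Prod.ext ?_ ?_ <;> simp [Nat.mul_div_cancel_left _ hr]
  -- fibers 1..t
  · refine Finset.sum_congr rfl fun i hi => ?_
    simp only [Finset.mem_Icc] at hi
    have hilt : i < r := by omega
    have hrilt : r - i < r := by omega
    have hine : i ≠ r - i := by omega
    refine Finset.card_nbij'
      (fun p => if p.1 % r = i then (p.1 / r, p.2 / r) else (p.2 / r, p.1 / r))
      (fun q => if r * q.2 + (r - i) < r * q.1 + i then (r * q.1 + i, r * q.2 + (r - i))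
        else (r * q.2 + (r - i), r * q.1 + i)) ?_ ?_ ?_ ?_
    · intro p hp
      beta_reduce
      simp only [Finset.mem_coe, Finset.mem_filter, Finset.mem_product] at hp
      obtain ⟨⟨⟨h1, h2⟩, hlt, hsum⟩, hmin⟩ := hp
      have hm1 : p.1 % r < r := Nat.mod_lt _ hr
      have hm2 : p.2 % r < r := Nat.mod_lt _ hr
      have hmod0 : (p.1 % r + p.2 % r) % r = 0 := by
        rw [← Nat.add_mod, hsum, Nat.mul_mod_right]
      have hsr := sum_residues hr hm1 hm2 hmod0
      have hd1 := Nat.div_add_mod p.1 r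
      have hd2 := Nat.div_add_mod p.2 r
      have hcase : (p.1 % r = i ∧ p.2 % r = r - i) ∨ (p.2 % r = i ∧ p.1 % r = r - i) := by
        rcases le_total (p.1 % r) (p.2 % r) with h | h
        · rw [min_eq_left h] at hmin; omega
        · rw [min_eq_right h] at hmin; omega
      rcases hcase with ⟨ha, hb⟩ | ⟨ha, hb⟩
      · rw [if_pos ha]
        simp only [Finset.mem_coe, Finset.mem_filter, Finset.mem_product]
        have e1 : p.1 = r * (p.1 / r) + i := by omega
        have e2 : p.2 = r * (p.2 / r) + (r - i) := by omega
        refine ⟨⟨(mem_Xset hilt).2 (by rw [← e1]; exact h1),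
          (mem_Xset hrilt).2 (by rw [← e2]; exact h2)⟩, ?_⟩
        have hmm : r * (p.1 / r + p.2 / r + 1) = r * j := by
          rw [Nat.mul_add, Nat.mul_add, Nat.mul_one]; omega
        have := Nat.eq_of_mul_eq_mul_left hr hmm
        omega
      · rw [if_neg (by omega)]
        simp only [Finset.mem_coe, Finset.mem_filter, Finset.mem_product]
        have e1 : p.2 = r * (p.2 / r) + i := by omega
        have e2 : p.1 = r * (p.1 / r) + (r - i) := by omega
        refine ⟨⟨(mem_Xset hilt).2 (by rw [← e1]; exact h2),
          (mem_Xset hrilt).2 (by rw [← e2]; exact h1)⟩, ?_⟩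
        have hmm : r * (p.2 / r + p.1 / r + 1) = r * j := by
          rw [Nat.mul_add, Nat.mul_add, Nat.mul_one]; omega
        have := Nat.eq_of_mul_eq_mul_left hr hmm
        omega
    · intro q hq
      simp only [Finset.mem_coe, Finset.mem_filter, Finset.mem_product] at hq
      obtain ⟨⟨h1, h2⟩, hsum⟩ := hq
      have ha := (mem_Xset hilt).1 h1
      have hb := (mem_Xset hrilt).1 h2
      have hma : (r * q.1 + i) % r = i := by
        simp [Nat.mul_add_mod, Nat.mod_eq_of_lt hilt]
      have hmb : (r * q.2 + (r - i)) % r = r - i := by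
        simp [Nat.mul_add_mod, Nat.mod_eq_of_lt hrilt]
      have habsum : (r * q.1 + i) + (r * q.2 + (r - i)) = r * j := by
        have hmm : r * (q.1 + q.2 + 1) = r * j := by
          rw [← hsum]
        rw [Nat.mul_add, Nat.mul_add, Nat.mul_one] at hmm
        omega
      have hne : r * q.1 + i ≠ r * q.2 + (r - i) := by
        intro hc
        have := congrArg (· % r) hc
        have this : (r * q.1 + i) % r = (r * q.2 + (r - i)) % r := this
        rw [hma, hmb] at this
        omega
      beta_reduce
      split_ifs with hcmp
      · simp only [Finset.mem_coe, Finset.mem_filter, Finset.mem_product]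
        refine ⟨⟨⟨ha, hb⟩, hcmp, habsum⟩, ?_⟩
        rw [hma, hmb]
        exact min_eq_left (by omega)
      · simp only [Finset.mem_coe, Finset.mem_filter, Finset.mem_product]
        refine ⟨⟨⟨hb, ha⟩, by omega, by omega⟩, ?_⟩
        rw [hmb, hma]
        exact min_eq_right (by omega)
    · intro p hp
      beta_reduce
      simp only [Finset.mem_coe, Finset.mem_filter, Finset.mem_product] at hp
      obtain ⟨⟨⟨h1, h2⟩, hlt, hsum⟩, hmin⟩ := hp
      have hm1 : p.1 % r < r := Nat.mod_lt _ hr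
      have hm2 : p.2 % r < r := Nat.mod_lt _ hr
      have hmod0 : (p.1 % r + p.2 % r) % r = 0 := by
        rw [← Nat.add_mod, hsum, Nat.mul_mod_right]
      have hsr := sum_residues hr hm1 hm2 hmod0
      have hd1 := Nat.div_add_mod p.1 r
      have hd2 := Nat.div_add_mod p.2 r
      have hcase : (p.1 % r = i ∧ p.2 % r = r - i) ∨ (p.2 % r = i ∧ p.1 % r = r - i) := by
        rcases le_total (p.1 % r) (p.2 % r) with h | h
        · rw [min_eq_left h] at hmin; omega
        · rw [min_eq_right h] at hmin; omega
      rcases hcase with ⟨ha, hb⟩ | ⟨ha, hb⟩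
      · beta_reduce
        rw [if_pos ha]
        beta_reduce
        rw [if_pos (by omega : r * (p.2 / r) + (r - i) < r * (p.1 / r) + i)]
        refine Prod.ext ?_ ?_ <;> simp <;> omega
      · beta_reduce
        rw [if_neg (show ¬ p.1 % r = i by omega)]
        beta_reduce
        rw [if_neg (by omega : ¬ (r * (p.1 / r) + (r - i) < r * (p.2 / r) + i))]
        refine Prod.ext ?_ ?_ <;> simp <;> omega
    · intro q hq
      have hda : (r * q.1 + i) / r = q.1 := by
        simp [Nat.mul_add_div hr, Nat.div_eq_of_lt hilt]
      have hdb : (r * q.2 + (r - i)) / r = q.2 := by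
        simp [Nat.mul_add_div hr, Nat.div_eq_of_lt hrilt]
      have hma : (r * q.1 + i) % r = i := by
        simp [Nat.mul_add_mod, Nat.mod_eq_of_lt hilt]
      have hmb : (r * q.2 + (r - i)) % r = r - i := by
        simp [Nat.mul_add_mod, Nat.mod_eq_of_lt hrilt]
      beta_reduce
      rcases lt_or_ge (r * q.2 + (r - i)) (r * q.1 + i) with hcmp | hcmp
      · rw [if_pos hcmp]
        show (if (r * q.1 + i) % r = i
            then ((r * q.1 + i) / r, (r * q.2 + (r - i)) / r)
            else ((r * q.2 + (r - i)) / r, (r * q.1 + i) / r)) = q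
        rw [if_pos hma, hda, hdb]
      · rw [if_neg (show ¬ (r * q.2 + (r - i) < r * q.1 + i) by omega)]
        show (if (r * q.2 + (r - i)) % r = i
            then ((r * q.2 + (r - i)) / r, (r * q.1 + i) / r)
            else ((r * q.1 + i) / r, (r * q.2 + (r - i)) / r)) = q
        rw [if_neg (show ¬ (r * q.2 + (r - i)) % r = i by rw [hmb]; omega), hda, hdb]


/-- For `r` odd, `j` odd and a strict partition `λ` (a finset `S` of distinct positive
integers), removing an `rj`-bar from `λ` corresponds exactly to removing a `j`-bar from
`λ⁰ = X⁰(λ)` or a `j`-hook from one of the components `λ¹, …, λᵗ = (Xⁱ(λ) | X^{r-i}(λ))`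
of the `r`-bar quotient; in particular the number of `rj`-bars of `λ` equals the number
of `j`-bars of `λ⁰` plus the total number of `j`-hooks of `λ¹, …, λᵗ`, `t = (r-1)/2`. -/
theorem nbars_eq_nbars_quotient_add_nhooks (r j : ℕ) (hr : Odd r) (hj : Odd j)
    (S : Finset ℕ) (h0 : (0 : ℕ) ∉ S) :
    nbars S (r * j) =
      nbars (Xset r S 0) j +
        ∑ i ∈ Finset.Icc 1 ((r - 1) / 2), nhooks (Xset r S i) (Xset r S (r - i)) j := by
  obtain ⟨t, ht⟩ := hr
  subst ht
  have hT : (2 * t + 1 - 1) / 2 = t := by omega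
  rw [hT]
  unfold nbars nhooks
  rw [firstkind (2*t+1) j (by omega) S, secondkind t j S, range_sum_split]
  have hsub : ∀ i ∈ Finset.Icc 1 t, (2*t+1) - i = 2*t+1-i := fun i _ => rfl
  rw [Finset.sum_add_distrib, Finset.sum_add_distrib, Finset.sum_add_distrib]
  omega
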